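/- arXiv:2505.09228 — 3 statements merged into one kernel-verified Lean document; each statement's English description precedes it below -/
import Mathlib

section
/- Billingsley's lemma, lower bound part: let μ be a finite Borel measure on [0,1] and E ⊆ [0,1] a Borel set with μ(E) > 0. If for μ-almost every x ∈ E, liminf_{n→∞} log μ(I_n(x)) / log |I_n(x)| ≥ s, then the Hausdorff dimension of E is at least s. -/
/-!
For `t < s`, almost every point of `E` lies in one of the increasing sets
`F_m = {x | μ (I_n x) ≤ b^(-n t) for all n ≥ m}`, so some `E ∩ F_m` has positive mass.
A set `A` with `b^(-n-1) < diam A ≤ b^(-n)` meets at most three generation-`n` intervals, so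
`μ (A ∩ F_m) ≤ 3 b^t (diam A)^t` for small `A`, and the mass distribution principle gives
`dimH (E ∩ F_m) ≥ t`.
-/

open Filter MeasureTheory

/-- The generation-n half-open b-adic interval containing x. -/
noncomputable def badicItv (b n : ℕ) (x : ℝ) : Set ℝ :=
  Set.Ico ((⌊(b : ℝ) ^ n * x⌋ : ℝ) / (b : ℝ) ^ n) (((⌊(b : ℝ) ^ n * x⌋ : ℝ) + 1) / (b : ℝ) ^ n)

/-- The lower local dimension of μ at x with respect to b-adic intervals. -/
noncomputable def lowerLocalDim (b : ℕ) (μ : Measure ℝ) (x : ℝ) : ℝ :=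
  liminf (fun n : ℕ =>
    Real.log ((μ (badicItv b n x)).toReal) / Real.log ((b : ℝ) ^ (-(n : ℝ)))) atTop

open Set Metric
open scoped NNReal ENNReal Topology

theorem Real.eventually_lt_of_nonneg_of_lt_liminf {α : Type*} {f : Filter α} {u : α → ℝ}
    {t : ℝ} (ht : 0 ≤ t) (h : t < liminf u f) : ∀ᶠ a in f, t < u a := by
  by_cases hu : IsBoundedUnder (· ≥ ·) f u
  · exact Filter.eventually_lt_of_lt_liminf h hu
  · -- `liminf u f` is then the junk value `sSup ∅ = 0`
    have : {a | ∀ᶠ n in f, a ≤ u n} = ∅ :=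
      eq_empty_of_forall_notMem fun a ha => hu ⟨a, ha⟩
    rw [liminf_eq, this, Real.sSup_empty] at h
    exact absurd h ht.not_gt

theorem Int.floor_mem_Icc_of_abs_sub_le_one {R : Type*} [Ring R] [LinearOrder R]
    [IsStrictOrderedRing R] [FloorRing R] {a a' : R} (h : |a - a'| ≤ 1) :
    ⌊a⌋ ∈ Finset.Icc (⌊a'⌋ - 1) (⌊a'⌋ + 1) := by
  obtain ⟨h₁, h₂⟩ := abs_sub_le_iff.mp h
  rw [Finset.mem_Icc, ← Int.floor_sub_one, ← Int.floor_add_one]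
  exact ⟨Int.floor_mono (sub_le_comm.mp h₂), Int.floor_mono (sub_le_iff_le_add'.mp h₁)⟩

section MassDistribution

variable {X : Type*} [EMetricSpace X] [MeasurableSpace X] [BorelSpace X]

theorem inv_mul_le_hausdorffMeasure_of_measure_inter_le (μ : Measure X) (F : Set X) {d : ℝ}
    {C r : ℝ≥0∞} (hr : 0 < r) (h : ∀ A, ediam A ≤ r → μ (A ∩ F) ≤ C * ediam A ^ d) :
    C⁻¹ * μ F ≤ μH[d] F := by
  have hν : C⁻¹ • μ.restrict F ≤ μH[d] := by
    refine Measure.le_hausdorffMeasure d _ r hr fun A hA => ?_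
    calc (C⁻¹ • μ.restrict F) A ≤ C⁻¹ * μ (closure A ∩ F) := by
          rw [Measure.smul_apply, smul_eq_mul,
            ← Measure.restrict_apply isClosed_closure.measurableSet]
          exact mul_le_mul_right (measure_mono subset_closure) _
      _ ≤ C⁻¹ * (C * ediam A ^ d) := by
          rw [← ediam_closure A]
          exact mul_le_mul_right (h _ ((ediam_closure A).trans_le hA)) _
      _ ≤ ediam A ^ d := by
          rw [← mul_assoc]
          exact mul_le_of_le_one_left zero_le (ENNReal.inv_mul_le_one C)
  simpa using hν F

theorem le_dimH_of_measure_inter_le (μ : Measure X) {F : Set X} {d : ℝ≥0} {C r : ℝ≥0∞}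
    (hr : 0 < r) (hC : C ≠ ∞) (hF : μ F ≠ 0)
    (h : ∀ A, ediam A ≤ r → μ (A ∩ F) ≤ C * ediam A ^ (d : ℝ)) :
    (d : ℝ≥0∞) ≤ dimH F := by
  refine le_dimH_of_hausdorffMeasure_ne_zero fun h0 => ?_
  have := inv_mul_le_hausdorffMeasure_of_measure_inter_le μ F hr h
  rw [h0, nonpos_iff_eq_zero, mul_eq_zero] at this
  exact this.elim (ENNReal.inv_ne_zero.2 hC) hF

end MassDistribution

theorem mem_badicItv_self {b : ℕ} (hb : 0 < b) (n : ℕ) (x : ℝ) : x ∈ badicItv b n x := by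
  have hbn : (0 : ℝ) < (b : ℝ) ^ n := by positivity
  constructor
  · rw [div_le_iff₀ hbn, mul_comm]
    exact Int.floor_le _
  · rw [lt_div_iff₀ hbn, mul_comm]
    exact Int.lt_floor_add_one _

theorem measure_inter_le_three_mul_of_ediam_le {b : ℕ} (hb : 0 < b) {μ : Measure ℝ}
    {F A : Set ℝ} {n : ℕ} {M : ℝ≥0∞} (hF : ∀ x ∈ F, μ (badicItv b n x) ≤ M)
    (hA : ediam A ≤ ENNReal.ofReal ((b : ℝ) ^ n)⁻¹) : μ (A ∩ F) ≤ 3 * M := by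
  rcases (A ∩ F).eq_empty_or_nonempty with hAF | ⟨x, hxA, -⟩
  · simp [hAF]
  set k : ℝ → ℤ := fun y => ⌊(b : ℝ) ^ n * y⌋
  have hbn : (0 : ℝ) < (b : ℝ) ^ n := by positivity
  have hcover : A ∩ F ⊆ ⋃ j ∈ Finset.Icc (k x - 1) (k x + 1), {y ∈ F | k y = j} := by
    rintro y ⟨hyA, hyF⟩
    refine mem_iUnion₂.2 ⟨k y, Int.floor_mem_Icc_of_abs_sub_le_one ?_, hyF, rfl⟩
    have hyx : dist y x ≤ ((b : ℝ) ^ n)⁻¹ :=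
      (edist_le_ofReal (by positivity)).1 ((edist_le_ediam_of_mem hyA hxA).trans hA)
    rw [← mul_sub, abs_mul, abs_of_pos hbn, ← Real.dist_eq]
    calc (b : ℝ) ^ n * dist y x ≤ (b : ℝ) ^ n * ((b : ℝ) ^ n)⁻¹ := by gcongr
      _ = 1 := mul_inv_cancel₀ hbn.ne'
  have hfiber : ∀ j, μ {y ∈ F | k y = j} ≤ M := by
    intro j
    rcases {y ∈ F | k y = j}.eq_empty_or_nonempty with he | ⟨z, hzF, rfl⟩
    · simp [he]
    refine (measure_mono fun y hy => ?_).trans (hF z hzF)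
    have hyz : badicItv b n y = badicItv b n z := by simp only [badicItv, k, hy.2]
    exact hyz ▸ mem_badicItv_self hb n y
  calc μ (A ∩ F) ≤ ∑ j ∈ Finset.Icc (k x - 1) (k x + 1), μ {y ∈ F | k y = j} :=
        (measure_mono hcover).trans (measure_biUnion_finset_le _ _)
    _ ≤ ∑ _j ∈ Finset.Icc (k x - 1) (k x + 1), M := Finset.sum_le_sum fun j _ => hfiber j
    _ = 3 * M := by
        rw [Finset.sum_const, Int.card_Icc, nsmul_eq_mul,
          show k x + 1 + 1 - (k x - 1) = 3 by ring]
        rfl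

theorem exists_le_inv_pow_lt_mul {b : ℕ} (hb : 1 < b) {m : ℕ} {d : ℝ} (hd : 0 < d)
    (hdm : d ≤ ((b : ℝ) ^ m)⁻¹) :
    ∃ n, m ≤ n ∧ d ≤ ((b : ℝ) ^ n)⁻¹ ∧ ((b : ℝ) ^ n)⁻¹ < b * d := by
  have hb1 : (1 : ℝ) < b := by exact_mod_cast hb
  have hbm : (b : ℝ) ^ m ≤ d⁻¹ := by rwa [le_inv_comm₀ (by positivity) hd]
  obtain ⟨n, hn, hn'⟩ := exists_nat_pow_near ((one_le_pow₀ hb1.le).trans hbm) hb1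
  refine ⟨n, ?_, by rwa [le_inv_comm₀ hd (by positivity)], ?_⟩
  · have := (pow_lt_pow_iff_right₀ hb1).1 (hbm.trans_lt hn')
    omega
  · have hd' : ((b : ℝ) ^ (n + 1))⁻¹ < d := by rwa [inv_lt_comm₀ (by positivity) hd]
    calc ((b : ℝ) ^ n)⁻¹ = b * ((b : ℝ) ^ (n + 1))⁻¹ := by
          rw [pow_succ]; field_simp
      _ < b * d := by gcongr

theorem measure_inter_le_mul_ediam_rpow {b : ℕ} (hb : 1 < b) {μ : Measure ℝ} {F A : Set ℝ}
    {t : ℝ} (ht : 0 < t) {m : ℕ}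
    (hF : ∀ x ∈ F, ∀ n, m ≤ n → μ (badicItv b n x) ≤ ENNReal.ofReal (((b : ℝ) ^ n)⁻¹ ^ t))
    (hA : ediam A ≤ ENNReal.ofReal ((b : ℝ) ^ m)⁻¹) :
    μ (A ∩ F) ≤ ENNReal.ofReal (3 * (b : ℝ) ^ t) * ediam A ^ t := by
  have hb1 : (1 : ℝ) < b := by exact_mod_cast hb
  have hlevel : ∀ n, m ≤ n → ediam A ≤ ENNReal.ofReal ((b : ℝ) ^ n)⁻¹ →
      μ (A ∩ F) ≤ 3 * ENNReal.ofReal (((b : ℝ) ^ n)⁻¹ ^ t) := fun n hmn hn =>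
    measure_inter_le_three_mul_of_ediam_le (zero_lt_one.trans hb) (fun x hx => hF x hx n hmn) hn
  rcases eq_or_ne (ediam A) 0 with h0 | h0
  · have hlim : Tendsto (fun n : ℕ => 3 * ENNReal.ofReal (((b : ℝ) ^ n)⁻¹ ^ t)) atTop (𝓝 0) := by
      have h := (tendsto_inv_atTop_zero.comp
        (tendsto_pow_atTop_atTop_of_one_lt hb1)).rpow_const (Or.inr ht.le)
      rw [Real.zero_rpow ht.ne'] at h
      simpa using ENNReal.Tendsto.const_mul (ENNReal.tendsto_ofReal h)
        (Or.inr ENNReal.ofNat_ne_top)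
    have hnull : μ (A ∩ F) ≤ 0 :=
      ge_of_tendsto hlim (eventually_atTop.2 ⟨m, fun n hn => hlevel n hn (h0 ▸ zero_le)⟩)
    exact hnull.trans zero_le
  have hfin : ediam A ≠ ∞ := ne_top_of_le_ne_top ENNReal.ofReal_ne_top hA
  set d := (ediam A).toReal
  have hd : 0 < d := ENNReal.toReal_pos h0 hfin
  rw [← ENNReal.ofReal_toReal hfin] at hA hlevel ⊢
  obtain ⟨n, hmn, hdn, hnd⟩ :=
    exists_le_inv_pow_lt_mul hb hd ((ENNReal.ofReal_le_ofReal_iff (by positivity)).1 hA)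
  calc μ (A ∩ F) ≤ 3 * ENNReal.ofReal (((b : ℝ) ^ n)⁻¹ ^ t) :=
        hlevel n hmn (ENNReal.ofReal_le_ofReal hdn)
    _ ≤ 3 * ENNReal.ofReal ((b * d) ^ t) := by gcongr
    _ = ENNReal.ofReal (3 * (b : ℝ) ^ t) * ENNReal.ofReal d ^ t := by
        rw [Real.mul_rpow (by positivity) hd.le, ENNReal.ofReal_rpow_of_nonneg hd.le ht.le,
          ENNReal.ofReal_mul (p := 3) (by norm_num),
          ENNReal.ofReal_mul (p := (b : ℝ) ^ t) (by positivity), ENNReal.ofReal_ofNat, mul_assoc]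

theorem le_dimH_of_forall_measure_badicItv_le {b : ℕ} (hb : 1 < b) {μ : Measure ℝ} {F : Set ℝ}
    {t : ℝ≥0} (ht : 0 < t) {m : ℕ}
    (hF : ∀ x ∈ F, ∀ n, m ≤ n → μ (badicItv b n x) ≤ ENNReal.ofReal (((b : ℝ) ^ n)⁻¹ ^ (t : ℝ)))
    (hμF : μ F ≠ 0) : (t : ℝ≥0∞) ≤ dimH F :=
  le_dimH_of_measure_inter_le μ (ENNReal.ofReal_pos.2 (by positivity)) ENNReal.ofReal_ne_top hμF
    fun _ hA => measure_inter_le_mul_ediam_rpow hb ht hF hA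

theorem eventually_measure_badicItv_le {b : ℕ} (hb : 1 < b) {μ : Measure ℝ} {x t : ℝ}
    (ht : 0 < t) (hx : t < lowerLocalDim b μ x) :
    ∀ᶠ n in atTop, μ (badicItv b n x) ≤ ENNReal.ofReal (((b : ℝ) ^ n)⁻¹ ^ t) := by
  have hb1 : (1 : ℝ) < b := by exact_mod_cast hb
  filter_upwards [Real.eventually_lt_of_nonneg_of_lt_liminf ht.le hx, eventually_ge_atTop 1]
    with n hn hn1
  set ℓ := (b : ℝ) ^ (-(n : ℝ)) with hℓ
  rw [Real.rpow_neg (by positivity), Real.rpow_natCast] at hℓ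
  have hℓ0 : 0 < ℓ := by positivity
  have hlogℓ : Real.log ℓ < 0 :=
    Real.log_neg hℓ0 (Real.rpow_lt_one_of_one_lt_of_neg hb1 (by simp; omega))
  have hlog : Real.log (μ (badicItv b n x)).toReal < t * Real.log ℓ :=
    (lt_div_iff_of_neg hlogℓ).1 hn
  -- a null or infinite interval would give the ratio the junk value `log 0 / log ℓ = 0 < t`
  have hpos : 0 < (μ (badicItv b n x)).toReal := by
    by_contra h0
    rw [le_antisymm (not_lt.1 h0) ENNReal.toReal_nonneg, Real.log_zero] at hlog
    nlinarith
  rw [← hℓ, ← ENNReal.ofReal_toReal (ENNReal.toReal_pos_iff.1 hpos).2.ne]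
  exact ENNReal.ofReal_le_ofReal (Real.lt_rpow_of_log_lt hℓ0 hlog).le

theorem billingsley_lower_general (b : ℕ) (hb : 2 ≤ b) (μ : Measure ℝ) (E : Set ℝ) (s : ℝ)
    (hpos : 0 < μ E)
    (h : ∀ᵐ x ∂μ, x ∈ E → s ≤ lowerLocalDim b μ x) :
    ENNReal.ofReal s ≤ dimH E := by
  refine ENNReal.le_of_forall_pos_nnreal_lt fun t ht hts => ?_
  have hts' : (t : ℝ) < s :=
    (ENNReal.ofReal_lt_ofReal_iff'.1 (by rwa [ENNReal.ofReal_coe_nnreal])).1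
  set F : ℕ → Set ℝ := fun m =>
    {x | ∀ n, m ≤ n → μ (badicItv b n x) ≤ ENNReal.ofReal (((b : ℝ) ^ n)⁻¹ ^ (t : ℝ))}
  have hE : E ≤ᵐ[μ] ⋃ m, E ∩ F m := by
    filter_upwards [h] with x hx hxE
    obtain ⟨m, hm⟩ :=
      eventually_atTop.1 (eventually_measure_badicItv_le hb ht (hts'.trans_le (hx hxE)))
    exact mem_iUnion.2 ⟨m, hxE, hm⟩
  obtain ⟨m, hm⟩ :=
    exists_measure_pos_of_not_measure_iUnion_null (hpos.trans_le (measure_mono_ae hE)).ne'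
  exact (le_dimH_of_forall_measure_badicItv_le hb ht (fun x hx => hx.2) hm.ne').trans
    (dimH_mono inter_subset_left)

/-- Billingsley's lemma, lower bound: if μ(E) > 0 and the lower local dimension of μ is
≥ s at μ-almost every point of E, then dim_H E ≥ s. -/
theorem billingsley_lower (b : ℕ) (hb : 2 ≤ b) (μ : Measure ℝ) [IsFiniteMeasure μ]
    (hsupp : μ (Set.Icc (0:ℝ) 1)ᶜ = 0) (E : Set ℝ) (hE : MeasurableSet E)
    (hEsub : E ⊆ Set.Icc (0:ℝ) 1) (s : ℝ) (hpos : 0 < μ E)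
    (h : ∀ᵐ x ∂μ, x ∈ E → s ≤ lowerLocalDim b μ x) :
    ENNReal.ofReal s ≤ dimH E :=
  billingsley_lower_general b hb μ E s hpos h
end

section
/- Let b = 2 and let g_l(x) = {2^l x} be the saw-tooth wave. For the Haar wavelet ψ_{j,k}(x) = 2^{j/2} ψ(2^j x - k) with ψ = 1_{[0,1/2)} - 1_{[1/2,1)}, the inner product ⟨ψ_{j,k}, g_l⟩ (over [0,1]) equals 0 if j < l, and equals -(1/4)·2^{l-j}·2^{-j/2} if j ≥ l. -/
open Filter MeasureTheory
attribute [local instance] Classical.propDecidable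

/-- The 1-periodic saw-tooth function. -/
noncomputable def saw (x : ℝ) : ℝ :=
  if ∃ n : ℤ, x = (n : ℝ) then 0 else x - ⌊x⌋ - 1/2

/-- The Haar mother wavelet ψ = 1_{[0,1/2)} - 1_{[1/2,1)}. -/
noncomputable def haarPsi (x : ℝ) : ℝ :=
  Set.indicator (Set.Ico (0:ℝ) (1/2)) (fun _ => (1:ℝ)) x
    - Set.indicator (Set.Ico (1/2:ℝ) 1) (fun _ => (1:ℝ)) x

/-!
Substituting `u = 2^l x` turns the coefficient into `2^(j/2) 2^(-l)` times the difference of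
the integrals of the saw-tooth over two adjacent intervals `[c, c + h]`, `[c + h, c + 2h]`, where
`c = k 2^(l-j)` and `h = 2^(l-j-1)`. If `j < l`, then `h` is an integer and both integrals vanish
by periodicity. If `j ≥ l`, both intervals lie on a single tooth, where the saw-tooth has slope
`1`, and the difference is `-h²`.
-/

open Set

lemma saw_ae_eq_fract_sub_half : saw =ᵐ[volume] fun x => Int.fract x - 1/2 := by
  filter_upwards [(countable_range ((↑) : ℤ → ℝ)).ae_notMem volume] with x hx
  rw [saw, if_neg fun ⟨n, hn⟩ => hx ⟨n, hn.symm⟩, Int.fract]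

lemma intervalIntegrable_saw (a b : ℝ) : IntervalIntegrable saw volume a b := by
  refine IntervalIntegrable.congr_ae ?_ saw_ae_eq_fract_sub_half.symm.restrict
  rw [intervalIntegrable_iff]
  refine Measure.integrableOn_of_bounded measure_Ioc_lt_top.ne
    (measurable_fract.sub measurable_const).aestronglyMeasurable (M := 1) (ae_of_all _ fun x => ?_)
  rw [Real.norm_eq_abs, abs_le]
  constructor <;> linarith [Int.fract_nonneg x, Int.fract_lt_one x]

lemma integral_saw_eq_integral_fract_sub_half (a b : ℝ) :
    ∫ x in a..b, saw x = ∫ x in a..b, (Int.fract x - 1/2) :=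
  intervalIntegral.integral_congr_ae (saw_ae_eq_fract_sub_half.mono fun _ hx _ => hx)

/-- On `[M, M + 1]` the saw-tooth is a.e. `x - M - 1/2`, so its mean is its value at the midpoint. -/
lemma integral_saw_of_le_of_le (M : ℤ) {c d : ℝ} (hc : (M : ℝ) ≤ c) (hcd : c ≤ d)
    (hd : d ≤ M + 1) :
    ∫ x in c..d, saw x = (d - c) * ((c + d) / 2 - M - 1/2) := by
  have hcell : ∀ᵐ x : ℝ, x ∈ uIoc c d → Int.fract x - 1/2 = x - (M + 1/2) := by
    filter_upwards [(countable_singleton ((M : ℝ) + 1)).ae_notMem volume] with x hx hmem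
    rw [uIoc_of_le hcd] at hmem
    have hfloor : ⌊x⌋ = M := Int.floor_eq_iff.mpr
      ⟨hc.trans hmem.1.le, lt_of_le_of_ne (hmem.2.trans hd) hx⟩
    rw [Int.fract, hfloor]
    ring
  rw [integral_saw_eq_integral_fract_sub_half, intervalIntegral.integral_congr_ae hcell,
    intervalIntegral.integral_sub intervalIntegral.intervalIntegrable_id intervalIntegrable_const,
    integral_id, intervalIntegral.integral_const, smul_eq_mul]
  ring

lemma saw_periodic : Function.Periodic saw 1 := fun x => by
  have hint : (∃ n : ℤ, x + 1 = n) ↔ ∃ n : ℤ, x = n :=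
    ⟨fun ⟨n, hn⟩ => ⟨n - 1, by push_cast; linarith⟩, fun ⟨n, hn⟩ => ⟨n + 1, by push_cast; linarith⟩⟩
  simp only [saw, hint, Int.floor_add_one]
  push_cast
  ring_nf

lemma integral_saw_add_intCast (t : ℝ) (n : ℤ) : ∫ x in t..t + n, saw x = 0 := by
  have hcycle : ∫ x in t..t + 1, saw x = 0 := by
    rw [saw_periodic.intervalIntegral_add_eq t 0, integral_saw_of_le_of_le 0] <;> norm_num
  simpa [hcycle] using saw_periodic.intervalIntegral_add_zsmul_eq n t intervalIntegrable_saw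

lemma intervalIntegral_indicator_Ico {f : ℝ → ℝ} {a b c d : ℝ} (hac : a ≤ c) (hcd : c ≤ d)
    (hdb : d ≤ b) : ∫ x in a..b, (Ico c d).indicator f x = ∫ x in c..d, f x := by
  rw [intervalIntegral.integral_of_le (hac.trans (hcd.trans hdb)),
    intervalIntegral.integral_of_le hcd,
    integral_congr_ae (ae_restrict_of_ae (indicator_ae_eq_of_ae_eq_set Ico_ae_eq_Ioc)),
    integral_indicator measurableSet_Ioc, Measure.restrict_restrict measurableSet_Ioc,
    inter_eq_left.mpr (Ioc_subset_Ioc hac hdb)]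

lemma haarPsi_comp_mul_sub_mul {P : ℝ} (hP : 0 < P) (t : ℝ) (f : ℝ → ℝ) (x : ℝ) :
    haarPsi (P * x - t) * f x =
      (Ico (t / P) ((t + 1/2) / P)).indicator f x
        - (Ico ((t + 1/2) / P) ((t + 1) / P)).indicator f x := by
  have hmem : ∀ c d : ℝ, P * x - t ∈ Ico c d ↔ x ∈ Ico ((t + c) / P) ((t + d) / P) := by
    intro c d
    simp only [mem_Ico, div_le_iff₀ hP, lt_div_iff₀ hP]
    constructor <;> rintro ⟨h₁, h₂⟩ <;> constructor <;> linarith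
  simp only [haarPsi, indicator_apply, hmem, add_zero]
  split_ifs <;> ring

lemma integral_haarPsi_comp_mul_sub_mul {P t : ℝ} {f : ℝ → ℝ} (hP : 0 < P) (ht : 0 ≤ t)
    (htP : t + 1 ≤ P) (hf : IntervalIntegrable f volume 0 1) :
    ∫ x in 0..1, haarPsi (P * x - t) * f x =
      (∫ x in t / P..(t + 1/2) / P, f x) - ∫ x in (t + 1/2) / P..(t + 1) / P, f x := by
  have hind (c d : ℝ) : IntervalIntegrable ((Ico c d).indicator f) volume 0 1 :=
    (intervalIntegrable_iff_integrableOn_Ioc_of_le zero_le_one).mpr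
      (((intervalIntegrable_iff_integrableOn_Ioc_of_le zero_le_one).mp hf).indicator
        measurableSet_Ico)
  have h₁ : t / P ≤ (t + 1/2) / P := by gcongr; norm_num
  have h₂ : (t + 1/2) / P ≤ (t + 1) / P := by gcongr; norm_num
  have h₃ : (t + 1) / P ≤ 1 := (div_le_one hP).mpr htP
  simp_rw [haarPsi_comp_mul_sub_mul hP]
  rw [intervalIntegral.integral_sub (hind _ _) (hind _ _),
    intervalIntegral_indicator_Ico (by positivity) h₁ (h₂.trans h₃),
    intervalIntegral_indicator_Ico (by positivity) h₂ h₃]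

lemma integral_haarPsi_comp_mul_sub_mul_saw {P L t : ℝ} (hP : 0 < P) (hL : 0 < L) (ht : 0 ≤ t)
    (htP : t + 1 ≤ P) :
    ∫ x in 0..1, haarPsi (P * x - t) * saw (L * x) =
      L⁻¹ * ((∫ x in L * t / P..L * t / P + L / (2 * P), saw x)
        - ∫ x in L * t / P + L / (2 * P)..L * t / P + 2 * (L / (2 * P)), saw x) := by
  have hf : IntervalIntegrable (fun x => saw (L * x)) volume 0 1 := by
    simpa [hL.ne'] using (intervalIntegrable_saw 0 L).comp_mul_left (c := L)
  have hm : L * ((t + 1/2) / P) = L * t / P + L / (2 * P) := by field_simp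
  have hb : L * ((t + 1) / P) = L * t / P + 2 * (L / (2 * P)) := by field_simp
  rw [integral_haarPsi_comp_mul_sub_mul hP ht htP hf, intervalIntegral.integral_comp_mul_left _ hL.ne',
    intervalIntegral.integral_comp_mul_left _ hL.ne', hm, hb, mul_div_assoc, smul_eq_mul, smul_eq_mul,
    mul_sub]

lemma integral_saw_sub_integral_saw_of_le_of_le (M : ℤ) {c h : ℝ} (hc : (M : ℝ) ≤ c) (hh : 0 ≤ h)
    (hch : c + 2 * h ≤ M + 1) :
    (∫ x in c..c + h, saw x) - ∫ x in c + h..c + 2 * h, saw x = -h ^ 2 := by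
  rw [integral_saw_of_le_of_le M hc (by linarith) (by linarith),
    integral_saw_of_le_of_le M (by linarith) (by linarith) hch]
  ring

lemma exists_intCast_le_div_and_add_one_div_le (t d : ℕ) (hd : 0 < d) :
    ∃ M : ℤ, (M : ℝ) ≤ t / d ∧ ((t : ℝ) + 1) / d ≤ M + 1 := by
  have hd' : (0 : ℝ) < d := by exact_mod_cast hd
  refine ⟨(t / d : ℕ), ?_, ?_⟩
  · rw [le_div_iff₀ hd']
    exact_mod_cast Nat.div_mul_le_self t d
  · rw [div_le_iff₀ hd']
    have h := Nat.lt_div_mul_add (a := t) hd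
    rw [← add_one_mul] at h
    exact_mod_cast h

lemma two_rpow_half_mul_inv_mul_neg_sq (j l : ℕ) :
    (2 : ℝ) ^ ((j : ℝ) / 2) * (((2 : ℝ) ^ l)⁻¹ * -((2 : ℝ) ^ l / (2 * 2 ^ j)) ^ 2) =
      -(1/4) * (2 : ℝ) ^ ((l : ℝ) - (j : ℝ)) * (2 : ℝ) ^ (-(j : ℝ) / 2) := by
  have hs_sq : ((2 : ℝ) ^ ((j : ℝ) / 2)) ^ 2 = 2 ^ j := by
    rw [← Real.rpow_natCast, ← Real.rpow_mul zero_le_two]; norm_num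
  have hs_pos : (0 : ℝ) < 2 ^ ((j : ℝ) / 2) := by positivity
  rw [Real.rpow_sub two_pos, neg_div, Real.rpow_neg zero_le_two, Real.rpow_natCast,
    Real.rpow_natCast]
  generalize (2 : ℝ) ^ ((j : ℝ) / 2) = s at hs_sq hs_pos ⊢
  field_simp
  linear_combination -4 * hs_sq

/-- Haar coefficients of the dyadic saw-tooth waves g_l(x) = {2^l x}:
⟨ψ_{j,k}, g_l⟩ = 0 if j < l, and -(1/4)·2^{l-j}·2^{-j/2} if j ≥ l. -/
theorem haar_coeff_sawtooth (j k l : ℕ) (hk : k < 2 ^ j) :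
    ∫ x in (0:ℝ)..1, ((2:ℝ) ^ ((j:ℝ)/2) * haarPsi ((2:ℝ) ^ j * x - (k:ℝ)))
        * saw ((2:ℝ) ^ l * x) =
      if j < l then 0
      else -(1/4) * (2:ℝ) ^ ((l:ℝ) - (j:ℝ)) * (2:ℝ) ^ (-(j:ℝ)/2) := by
  set P : ℝ := 2 ^ j with hP_def
  set L : ℝ := 2 ^ l with hL_def
  have hP : 0 < P := by positivity
  have hL : 0 < L := by positivity
  have hkP : (k : ℝ) + 1 ≤ P := by rw [hP_def]; exact_mod_cast hk
  simp_rw [mul_assoc ((2 : ℝ) ^ ((j : ℝ) / 2))]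
  rw [intervalIntegral.integral_const_mul,
    integral_haarPsi_comp_mul_sub_mul_saw hP hL k.cast_nonneg hkP]
  set c : ℝ := L * k / P with hc
  set h : ℝ := L / (2 * P) with hh
  split_ifs with hjl
  · obtain ⟨n, hn⟩ : ∃ n : ℤ, h = n :=
      ⟨2 ^ (l - j - 1), by
        rw [hh, div_eq_iff (by positivity), hL_def, hP_def]; push_cast
        rw [← pow_succ', ← pow_add]; congr 1; omega⟩
    rw [two_mul, ← add_assoc, hn, integral_saw_add_intCast, integral_saw_add_intCast]
    simp
  · obtain ⟨d, hd, hPd⟩ : ∃ d : ℕ, 0 < d ∧ P = d * L :=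
      ⟨2 ^ (j - l), by positivity, by rw [hL_def, hP_def]; push_cast; rw [← pow_add]; congr 1; omega⟩
    obtain ⟨M, hM_le, hM_ge⟩ := exists_intCast_le_div_and_add_one_div_le k d hd
    have hc_eq : c = k / d := by rw [hc, hPd]; field_simp
    have hch_eq : c + 2 * h = (k + 1) / d := by rw [hc, hh, hPd]; field_simp
    rw [integral_saw_sub_integral_saw_of_le_of_le M (hc_eq ▸ hM_le) (by positivity)
      (hch_eq ▸ hM_ge)]
    exact two_rpow_half_mul_inv_mul_neg_sq j l
end

section
/- Let η > 1 and let (l_i) be the sequence defined by l_{i+1} = ⌊l_i η⌋ with l_1 a sufficiently large integer. Let y ∈ [0,1) be the number whose b-ary expansion is the concatenation of the blocks ν_i = 0^{⌊l_i η⌋ - l_i - 1}1. Then Δ^b(y) = η. -/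
open Filter MeasureTheory
attribute [local instance] Classical.propDecidable

/-- Distance from t to the nearest integer. -/
noncomputable def nint (t : ℝ) : ℝ := |t - round t|

/-- The b-adic approximation exponent Δ^b(x). -/
noncomputable def Delta (b : ℕ) (x : ℝ) : ℝ :=
  sSup {α : ℝ | 1 ≤ α ∧
    ∃ᶠ n : ℕ in atTop, nint ((b : ℝ) ^ n * x) ≤ (b : ℝ) ^ (-(n : ℝ) * (α - 1))}

/-- `IsExpansion b x ε` : `ε` (indexed from 1) is a b-ary digit expansion of `x`
which does not end in an infinite tail of (b-1)'s. -/
structure IsExpansion (b : ℕ) (x : ℝ) (ε : ℕ → ℕ) : Prop where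
  digit_lt : ∀ i, ε i < b
  sum_eq : x = ∑' i : ℕ, (ε (i + 1) : ℝ) / (b : ℝ) ^ (i + 1)
  no_tail : ¬ ∀ᶠ i in atTop, ε i = b - 1

/-!
Apart from the isolated positions `l i - l 1` (`i ≥ 2`), all digits of `y` vanish, and the
gaps `l (i + 1) - l i ≈ (η - 1) l i` grow geometrically. Right after the nonzero digit at
`n = l i - l 1` there are about `(η - 1) l i` zeros, so `‖bⁿ y‖ ≤ b ^ (-(η - 1) l i)`, which
gives `Δ ≥ η`. Conversely, from any position `n` the next nonzero digit is at most
`(η - 1) (n + l 1)` places away; since no two nonzero digits are adjacent, the fractional part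
of `bⁿ y` is then at distance at least `b ^ (-(η - 1) (n + l 1) - 2)` from `ℤ`, so `Δ ≤ η`.
-/

theorem nint_intCast_add (N : ℤ) (x : ℝ) : nint (N + x) = nint x := by
  rw [nint, nint, add_comm, round_add_intCast]
  push_cast
  ring_nf

theorem nint_le_abs (x : ℝ) : nint x ≤ |x| := by
  simpa [nint] using round_le x 0

theorem min_le_nint (x : ℝ) : min x (1 - x) ≤ nint x := by
  rw [nint]
  rcases le_or_gt (round x) 0 with h | h
  · have h' : (round x : ℝ) ≤ 0 := by exact_mod_cast h
    exact (min_le_left _ _).trans ((by linarith : x ≤ x - round x).trans (le_abs_self _))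
  · have h' : (1 : ℝ) ≤ round x := by exact_mod_cast h
    refine (min_le_right _ _).trans ((by linarith : 1 - x ≤ -(x - round x)).trans ?_)
    exact neg_le_abs _

namespace Real

variable {b : ℕ}

theorem ofDigits_eq_div (d : ℕ → Fin b) :
    ofDigits d = ((d 0 : ℕ) + ofDigits (fun i ↦ d (i + 1))) / b := by
  rw [ofDigits_eq_sum_add_ofDigits d 1]
  simp only [Finset.sum_range_one, ofDigitsTerm, zero_add, pow_one]
  ring

theorem exists_pow_mul_ofDigits_eq (d : ℕ → Fin b) (n : ℕ) :
    ∃ N : ℤ, (b : ℝ) ^ n * ofDigits d = N + ofDigits (fun i ↦ d (i + n)) := by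
  induction n with
  | zero => exact ⟨0, by simp⟩
  | succ n ih =>
    obtain ⟨N, hN⟩ := ih
    have hb : (b : ℝ) ≠ 0 := by exact_mod_cast (Fin.pos (d 0)).ne'
    refine ⟨b * N + (d n : ℕ), ?_⟩
    rw [pow_succ', mul_assoc, hN, ofDigits_eq_div]
    simp only [zero_add, add_assoc, add_comm 1 n]
    push_cast
    field_simp
    ring

theorem ofDigits_le_inv_pow {d : ℕ → Fin b} {k : ℕ} (h : ∀ i < k, (d i : ℕ) = 0) :
    ofDigits d ≤ ((b : ℝ) ^ k)⁻¹ := by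
  have hzero : ∑ i ∈ Finset.range k, ofDigitsTerm d i = 0 :=
    Finset.sum_eq_zero fun i hi ↦ by simp [ofDigitsTerm, h i (Finset.mem_range.1 hi)]
  rw [ofDigits_eq_sum_add_ofDigits d k, hzero, zero_add]
  exact mul_le_of_le_one_right (by positivity) (ofDigits_le_one _)

theorem inv_pow_succ_le_ofDigits {d : ℕ → Fin b} {k : ℕ} (h : (d k : ℕ) ≠ 0) :
    ((b : ℝ) ^ (k + 1))⁻¹ ≤ ofDigits d := by
  have hk : (1 : ℝ) ≤ (d k : ℕ) := by exact_mod_cast Nat.one_le_iff_ne_zero.2 h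
  calc ((b : ℝ) ^ (k + 1))⁻¹ ≤ ofDigitsTerm d k :=
        le_mul_of_one_le_left (by positivity) hk
    _ ≤ ofDigits d := summable_ofDigitsTerm.le_tsum k fun _ _ ↦ ofDigitsTerm_nonneg

theorem ofDigits_le_one_sub {d : ℕ → Fin b} (h : (d 0 : ℕ) = 0 ∨ (d 1 : ℕ) = 0) :
    ofDigits d ≤ 1 - ((b : ℝ) - 1) / b ^ 2 := by
  have hb : (1 : ℝ) ≤ b := by exact_mod_cast Fin.pos (d 0)
  have hd0 : ((d 0 : ℕ) : ℝ) ≤ b - 1 := by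
    rw [le_sub_iff_add_le]; exact_mod_cast (d 0).isLt
  rw [ofDigits_eq_div, div_le_iff₀ (by positivity)]
  rcases h with h | h
  · rw [h, Nat.cast_zero, zero_add]
    have := ofDigits_le_one (fun i ↦ d (i + 1))
    field_simp
    nlinarith
  · have := ofDigits_le_inv_pow (d := fun i ↦ d (i + 1)) (k := 1) (by simpa using h)
    have hT : ofDigits (fun i ↦ d (i + 1)) * b ≤ 1 := by
      rwa [pow_one, ← one_div, le_div_iff₀ (by positivity)] at this
    field_simp
    nlinarith

end Real

theorem IsExpansion.eq_ofDigits {b : ℕ} {x : ℝ} {ε : ℕ → ℕ} (h : IsExpansion b x ε) :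
    x = Real.ofDigits fun i ↦ (⟨ε (i + 1), h.digit_lt _⟩ : Fin b) := by
  refine h.sum_eq.trans (tsum_congr fun i ↦ ?_)
  simp [Real.ofDigitsTerm, div_eq_mul_inv]

section Approximation

variable {b : ℕ}

theorem nint_pow_mul_ofDigits (d : ℕ → Fin b) (n : ℕ) :
    nint ((b : ℝ) ^ n * Real.ofDigits d) = nint (Real.ofDigits fun i ↦ d (i + n)) := by
  obtain ⟨N, hN⟩ := Real.exists_pow_mul_ofDigits_eq d n
  rw [hN, nint_intCast_add]

theorem nint_ofDigits_le_inv_pow {d : ℕ → Fin b} {k : ℕ} (h : ∀ i < k, (d i : ℕ) = 0) :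
    nint (Real.ofDigits d) ≤ ((b : ℝ) ^ k)⁻¹ :=
  ((nint_le_abs _).trans_eq (abs_of_nonneg (Real.ofDigits_nonneg d))).trans
    (Real.ofDigits_le_inv_pow h)

/-- A nonzero digit in position `k` keeps `ofDigits d` away from `0`; a zero digit in
one of the first two positions keeps it away from `1`. -/
theorem inv_pow_le_nint_ofDigits (hb : 2 ≤ b) {d : ℕ → Fin b} {k : ℕ}
    (h01 : (d 0 : ℕ) = 0 ∨ (d 1 : ℕ) = 0) (hk : (d k : ℕ) ≠ 0) :
    ((b : ℝ) ^ (k + 2))⁻¹ ≤ nint (Real.ofDigits d) := by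
  have hb' : (2 : ℝ) ≤ b := by exact_mod_cast hb
  have hpow : ((b : ℝ) ^ (k + 2))⁻¹ ≤ ((b : ℝ) ^ 2)⁻¹ :=
    inv_anti₀ (by positivity) (pow_le_pow_right₀ (by linarith) (by omega))
  refine le_trans (le_min ?_ ?_) (min_le_nint _)
  · exact (inv_anti₀ (by positivity) (pow_le_pow_right₀ (by linarith) (by omega))).trans
      (Real.inv_pow_succ_le_ofDigits hk)
  · have := Real.ofDigits_le_one_sub h01
    have : ((b : ℝ) ^ 2)⁻¹ ≤ ((b : ℝ) - 1) / b ^ 2 := by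
      rw [inv_eq_one_div]; gcongr; linarith
    linarith

theorem Delta_eq_of_frequently_of_eventually {x η : ℝ}
    (hlow : ∀ α, 1 ≤ α → α < η →
      ∃ᶠ n : ℕ in atTop, nint ((b : ℝ) ^ n * x) ≤ (b : ℝ) ^ (-(n : ℝ) * (α - 1)))
    (hup : ∀ α, η < α →
      ∀ᶠ n : ℕ in atTop, (b : ℝ) ^ (-(n : ℝ) * (α - 1)) < nint ((b : ℝ) ^ n * x)) :
    Delta b x = η := by
  set S := {α : ℝ | 1 ≤ α ∧
    ∃ᶠ n : ℕ in atTop, nint ((b : ℝ) ^ n * x) ≤ (b : ℝ) ^ (-(n : ℝ) * (α - 1))}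
  have hS_le : ∀ α ∈ S, α ≤ η := fun α ⟨_, hα⟩ ↦ not_lt.1 fun h ↦
    let ⟨_, hle, hlt⟩ := (hα.and_eventually (hup α h)).exists
    hle.not_gt hlt
  have hS_bdd : BddAbove S := ⟨η, hS_le⟩
  have h1 : 1 ∈ S := ⟨le_rfl, Frequently.of_forall fun n ↦ by
    simpa [nint] using (abs_sub_round ((b : ℝ) ^ n * x)).trans (by norm_num)⟩
  change sSup S = η
  refine le_antisymm (csSup_le ⟨1, h1⟩ hS_le) (le_of_forall_lt fun c hc ↦ ?_)
  rcases lt_or_ge c 1 with hc1 | hc1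
  · exact hc1.trans_le (le_csSup hS_bdd h1)
  · have hmid : (c + η) / 2 ∈ S := ⟨by linarith, hlow _ (by linarith) (by linarith)⟩
    exact (by linarith : c < (c + η) / 2).trans_le (le_csSup hS_bdd hmid)

theorem frequently_nint_pow_mul_ofDigits_le {d : ℕ → Fin b} {p g : ℕ → ℕ} {α : ℝ}
    (hp : Tendsto p atTop atTop) (hzero : ∀ i, ∀ j < g i, (d (p i + j) : ℕ) = 0)
    (hg : ∀ᶠ i in atTop, (p i : ℝ) * (α - 1) ≤ g i) :
    ∃ᶠ n : ℕ in atTop,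
      nint ((b : ℝ) ^ n * Real.ofDigits d) ≤ (b : ℝ) ^ (-(n : ℝ) * (α - 1)) := by
  have hb : (1 : ℝ) ≤ b := by exact_mod_cast Fin.pos (d 0)
  refine hp.frequently (hg.frequently.mono fun i hi ↦ ?_)
  rw [nint_pow_mul_ofDigits]
  calc _ ≤ ((b : ℝ) ^ g i)⁻¹ :=
        nint_ofDigits_le_inv_pow fun j hj ↦ by rw [add_comm]; exact hzero i j hj
    _ = (b : ℝ) ^ (-(g i : ℝ)) := by rw [Real.rpow_neg (by positivity), Real.rpow_natCast]
    _ ≤ _ := Real.rpow_le_rpow_of_exponent_le hb (by linarith)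

theorem eventually_lt_nint_pow_mul_ofDigits (hb : 2 ≤ b) {d : ℕ → Fin b} {c e α : ℝ}
    (h01 : ∀ n, (d n : ℕ) = 0 ∨ (d (n + 1) : ℕ) = 0)
    (hnext : ∀ n, ∃ k, (d (n + k) : ℕ) ≠ 0 ∧ (k : ℝ) ≤ c * n + e) (hα : c + 1 < α) :
    ∀ᶠ n : ℕ in atTop,
      (b : ℝ) ^ (-(n : ℝ) * (α - 1)) < nint ((b : ℝ) ^ n * Real.ofDigits d) := by
  have hb' : (1 : ℝ) < b := by exact_mod_cast hb
  have hlarge : ∀ᶠ n : ℕ in atTop, e + 2 < (α - 1 - c) * n :=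
    (tendsto_natCast_atTop_atTop.const_mul_atTop (by linarith)).eventually_gt_atTop _
  refine hlarge.mono fun n hn ↦ ?_
  obtain ⟨k, hk, hkn⟩ := hnext n
  rw [nint_pow_mul_ofDigits]
  calc (b : ℝ) ^ (-(n : ℝ) * (α - 1)) < (b : ℝ) ^ (-((k + 2 : ℕ) : ℝ)) :=
        Real.rpow_lt_rpow_of_exponent_lt hb' (by push_cast; linarith)
    _ = ((b : ℝ) ^ (k + 2))⁻¹ := by rw [Real.rpow_neg (by positivity), Real.rpow_natCast]
    _ ≤ _ := inv_pow_le_nint_ofDigits hb (by simpa [add_comm] using h01 n)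
        (by simpa [add_comm] using hk)

end Approximation

theorem StrictMono.apply_ne_of_lt_of_lt_succ {α : Type*} [LinearOrder α] {f : ℕ → α}
    (hf : StrictMono f) {i j : ℕ} {x : α} (h₁ : f i < x) (h₂ : x < f (i + 1)) : f j ≠ x := by
  rintro rfl
  have := hf.lt_iff_lt.1 h₁
  have := hf.lt_iff_lt.1 h₂
  omega

def IsFloorMulSeq (η : ℝ) (a : ℕ → ℕ) : Prop :=
  ∀ i, (a (i + 1) : ℤ) = ⌊(a i : ℝ) * η⌋

namespace IsFloorMulSeq

variable {η : ℝ} {a : ℕ → ℕ}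

theorem succ_le_mul (ha : IsFloorMulSeq η a) (i : ℕ) : (a (i + 1) : ℝ) ≤ a i * η := by
  have := Int.floor_le ((a i : ℝ) * η)
  rwa [← ha i, Int.cast_natCast] at this

theorem mul_sub_one_lt_succ (ha : IsFloorMulSeq η a) (i : ℕ) :
    (a i : ℝ) * η - 1 < a (i + 1) := by
  have := Int.sub_one_lt_floor ((a i : ℝ) * η)
  rwa [← ha i, Int.cast_natCast] at this

theorem add_two_le_succ (ha : IsFloorMulSeq η a) (hη : 1 < η) (h0 : 2 / (η - 1) ≤ a 0)
    (i : ℕ) : a i + 2 ≤ a (i + 1) := by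
  have h0' : 2 ≤ (η - 1) * a 0 := by rwa [div_le_iff₀ (by linarith), mul_comm] at h0
  have step : ∀ i, a 0 ≤ a i → a i + 2 ≤ a (i + 1) := by
    intro i hi
    have hi' : (a 0 : ℝ) ≤ a i := by exact_mod_cast hi
    have := ha.mul_sub_one_lt_succ i
    have : (a i : ℝ) + 1 < a (i + 1) := by nlinarith
    have : a i + 1 < a (i + 1) := by exact_mod_cast this
    omega
  have hge : ∀ i, a 0 ≤ a i := by
    intro i
    induction i with
    | zero => rfl
    | succ i ih => have := step i ih; omega
  exact step i (hge i)

theorem strictMono (ha : IsFloorMulSeq η a) (hη : 1 < η) (h0 : 2 / (η - 1) ≤ a 0) :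
    StrictMono a :=
  strictMono_nat_of_lt_succ fun i ↦ by have := ha.add_two_le_succ hη h0 i; omega

theorem eventually_mul_le_gap (ha : IsFloorMulSeq η a) (hη : 1 < η) (h0 : 2 / (η - 1) ≤ a 0)
    {α : ℝ} (hα1 : 1 ≤ α) (hαη : α < η) :
    ∀ᶠ i in atTop,
      ((a (i + 1) - a 0 : ℕ) : ℝ) * (α - 1) ≤ ((a (i + 2) - a (i + 1) - 1 : ℕ) : ℝ) := by
  have hmono := ha.strictMono hη h0
  have htends : Tendsto (fun i ↦ (a (i + 1) : ℝ)) atTop atTop :=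
    tendsto_natCast_atTop_atTop.comp (hmono.tendsto_atTop.comp (tendsto_add_atTop_nat 1))
  have hlarge : ∀ᶠ i in atTop, 2 ≤ (η - α) * a (i + 1) :=
    (htends.const_mul_atTop (by linarith)).eventually_ge_atTop 2
  refine hlarge.mono fun i hi ↦ ?_
  have h0i : a 0 ≤ a (i + 1) := hmono.monotone (Nat.zero_le _)
  have hgap : a (i + 1) + 2 ≤ a (i + 2) := ha.add_two_le_succ hη h0 (i + 1)
  have hsucc : (a (i + 1) : ℝ) * η - 1 < a (i + 2) := ha.mul_sub_one_lt_succ (i + 1)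
  rw [Nat.cast_sub h0i, Nat.cast_sub (by omega), Nat.cast_sub (by omega)]
  simp only [Nat.cast_one]
  nlinarith [(Nat.cast_nonneg (a 0) : (0 : ℝ) ≤ a 0)]

end IsFloorMulSeq

section BlockDigits

variable {b : ℕ} {η : ℝ} {a : ℕ → ℕ} {d : ℕ → Fin b}

theorem digit_eq_zero_of_lt_of_lt (hmono : StrictMono a)
    (hd : ∀ m, (d m : ℕ) ≠ 0 ↔ ∃ i, m + 1 + a 0 = a (i + 1)) {i m : ℕ}
    (h₁ : a i < m + 1 + a 0) (h₂ : m + 1 + a 0 < a (i + 1)) : (d m : ℕ) = 0 := by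
  by_contra h
  obtain ⟨j, hj⟩ := (hd m).1 h
  exact hmono.apply_ne_of_lt_of_lt_succ h₁ h₂ hj.symm

theorem digit_eq_zero_of_lt_gap (hmono : StrictMono a)
    (hd : ∀ m, (d m : ℕ) ≠ 0 ↔ ∃ i, m + 1 + a 0 = a (i + 1)) {i j : ℕ}
    (hj : j < a (i + 2) - a (i + 1) - 1) : (d (a (i + 1) - a 0 + j) : ℕ) = 0 := by
  have := hmono.monotone (Nat.zero_le (i + 1))
  have : a (i + 1) < a (i + 2) := hmono (by omega)
  exact digit_eq_zero_of_lt_of_lt hmono hd (i := i + 1) (by omega)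
    (show _ < a (i + 2) by omega)

theorem digit_eq_zero_or_succ_eq_zero (ha : IsFloorMulSeq η a) (hη : 1 < η)
    (h0 : 2 / (η - 1) ≤ a 0) (hd : ∀ m, (d m : ℕ) ≠ 0 ↔ ∃ i, m + 1 + a 0 = a (i + 1))
    (n : ℕ) :
    (d n : ℕ) = 0 ∨ (d (n + 1) : ℕ) = 0 := by
  refine or_iff_not_imp_left.2 fun h ↦ ?_
  obtain ⟨i, hi⟩ := (hd n).1 h
  have : a (i + 1) + 2 ≤ a (i + 2) := ha.add_two_le_succ hη h0 (i + 1)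
  exact digit_eq_zero_of_lt_of_lt (ha.strictMono hη h0) hd (i := i + 1) (by omega)
    (show _ < a (i + 2) by omega)

theorem exists_digit_ne_zero (ha : IsFloorMulSeq η a) (hη : 1 < η)
    (h0 : 2 / (η - 1) ≤ a 0) (hd : ∀ m, (d m : ℕ) ≠ 0 ↔ ∃ i, m + 1 + a 0 = a (i + 1))
    (n : ℕ) :
    ∃ k, (d (n + k) : ℕ) ≠ 0 ∧ (k : ℝ) ≤ (η - 1) * n + (η - 1) * a 0 := by
  have hmono := ha.strictMono hη h0
  obtain ⟨i, hi, hi'⟩ :=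
    hmono.exists_between_of_tendsto_atTop hmono.tendsto_atTop (x := n + 1 + a 0) (by omega)
  refine ⟨a (i + 1) - (n + 1 + a 0), (hd _).2 ⟨i, by omega⟩, ?_⟩
  have hle : (a i : ℝ) ≤ n + a 0 := by exact_mod_cast Nat.le_of_lt_succ (by omega)
  have := ha.succ_le_mul i
  rw [Nat.cast_sub hi']
  push_cast
  nlinarith

end BlockDigits

/-- For η > 1 and l_{i+1} = ⌊l_i η⌋ with l₁ sufficiently large, the number y whose b-ary
expansion is the concatenation of the blocks ν_i = 0^{⌊l_i η⌋ - l_i - 1}1 satisfies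
Δᵇ(y) = η.  The digit at position n equals 1 exactly when n + l₁ = l_i for some i ≥ 2,
and 0 otherwise. -/
theorem Delta_of_block_expansion (b : ℕ) (hb : 2 ≤ b) (η : ℝ) (hη : 1 < η)
    (l : ℕ → ℕ) (hl1 : 2 / (η - 1) ≤ (l 1 : ℝ))
    (hrec : ∀ i : ℕ, 1 ≤ i → (l (i + 1) : ℤ) = ⌊(l i : ℝ) * η⌋)
    (y : ℝ) (θ : ℕ → ℕ) (hθ : IsExpansion b y θ)
    (hdigits : ∀ n : ℕ, 1 ≤ n →
      θ n = if ∃ i : ℕ, 2 ≤ i ∧ n + l 1 = l i then 1 else 0) :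
    Delta b y = η := by
  set a : ℕ → ℕ := fun i ↦ l (i + 1)
  set d : ℕ → Fin b := fun i ↦ ⟨θ (i + 1), hθ.digit_lt _⟩
  have ha : IsFloorMulSeq η a := fun i ↦ hrec (i + 1) (by omega)
  have hd : ∀ m, (d m : ℕ) ≠ 0 ↔ ∃ i, m + 1 + a 0 = a (i + 1) := by
    intro m
    simp only [d]
    rw [hdigits (m + 1) (by omega)]
    split_ifs with h
    · obtain ⟨i, hi, he⟩ := h
      refine iff_of_true one_ne_zero ⟨i - 2, ?_⟩
      simp only [a]
      rwa [show i - 2 + 1 + 1 = i by omega]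
    · exact iff_of_false (not_not.2 rfl) fun ⟨i, hi⟩ ↦ h ⟨i + 2, by omega, hi⟩
  have hmono := ha.strictMono hη hl1
  rw [show y = Real.ofDigits d from hθ.eq_ofDigits]
  refine Delta_eq_of_frequently_of_eventually (fun α hα1 hαη ↦ ?_) (fun α hα ↦ ?_)
  · exact frequently_nint_pow_mul_ofDigits_le
      ((tendsto_sub_atTop_nat (a 0)).comp (hmono.tendsto_atTop.comp (tendsto_add_atTop_nat 1)))
      (fun i j hj ↦ digit_eq_zero_of_lt_gap hmono hd hj)
      (ha.eventually_mul_le_gap hη hl1 hα1 hαη)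
  · exact eventually_lt_nint_pow_mul_ofDigits hb (digit_eq_zero_or_succ_eq_zero ha hη hl1 hd)
      (exists_digit_ne_zero ha hη hl1 hd) (by linarith)
end
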